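/- arXiv:math/0204337 — 2 statements merged into one kernel-verified Lean document; each statement's English description precedes it below -/
import Mathlib

section
/- Let H be a quasi-Hopf algebra with coassociator φ and quasi-antipode (S, α, β). Then the map φ: H⊗H → H⊗H, g⊗h ↦ g·S(φ⁻¹⁽¹⁾)·α·φ⁻¹⁽²⁾·h₍₁₎ ⊗ φ⁻¹⁽³⁾·h₍₂₎ (written with φ⁻¹ = φ⁻¹⁽¹⁾⊗φ⁻¹⁽²⁾⊗φ⁻¹⁽³⁾ and Δ(h) = h₍₁₎⊗h₍₂₎, with implicit summation) is bijective, with inverse g⊗h ↦ g·φ⁽¹⁾·β·S(h₍₁₎·φ⁽²⁾) ⊗ h₍₂₎·φ⁽³⁾. -/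
/-!
Both maps have the form `g ⊗ h ↦ (g ⊗ 1) · f(h)`, so they are mutually inverse as soon as
`Can⁻¹(w · Δ(h)) = 1 ⊗ h` and `Can(f(h)) = 1 ⊗ h`, where `f(h) = φ⁽¹⁾β S(h₍₁₎φ⁽²⁾) ⊗ h₍₂₎φ⁽³⁾`.
Each of these is a contraction of an element of `H^⊗4`, namely `a ⊗ b ⊗ c ⊗ d ↦ S(a)αbβS(c) ⊗ d`
resp. `a ⊗ b ⊗ c ⊗ d ↦ aβS(b)αc ⊗ d`. Quasi-coassociativity moves `Δ(h)` past `φ`, the pentagon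
trades `(id ⊗ id ⊗ Δ)(φ^{∓1})(1 ⊗ φ^{±1})` for the remaining three legs, and the antipode axioms
`S(h₍₁₎)αh₍₂₎ = ε(h)α`, `h₍₁₎βS(h₍₂₎) = ε(h)β` turn the legs carrying a coproduct into counits.
Since `(ε ⊗ id ⊗ id)(φ) = 1` (the pentagon under `ε ⊗ ε ⊗ id ⊗ id`) and `(id ⊗ ε ⊗ id)(φ) = 1`,
only `S(φ⁻¹⁽¹⁾)αφ⁻¹⁽²⁾βS(φ⁻¹⁽³⁾) ⊗ h` resp. `φ⁽¹⁾βS(φ⁽²⁾)αφ⁽³⁾ ⊗ h` survives, which is `1 ⊗ h`.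
-/

open TensorProduct LinearMap

/-- A quasibialgebra over a field `k`. -/
structure QuasiBialgebra (k : Type*) [Field k] (H : Type*) [Ring H] [Algebra k H] where
  comul : H →ₐ[k] H ⊗[k] H
  counit : H →ₐ[k] k
  assoc : H ⊗[k] (H ⊗[k] H)
  assocInv : H ⊗[k] (H ⊗[k] H)
  assoc_mul_inv : assoc * assocInv = 1
  inv_mul_assoc : assocInv * assoc = 1
  counit_comul_left : ∀ h : H,
    (TensorProduct.lid k H) ((LinearMap.rTensor H counit.toLinearMap) (comul h)) = h
  counit_comul_right : ∀ h : H,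
    (TensorProduct.rid k H) ((LinearMap.lTensor H counit.toLinearMap) (comul h)) = h
  quasi_coassoc : ∀ h : H,
    (Algebra.TensorProduct.map (AlgHom.id k H) comul) (comul h) * assoc
      = assoc * (Algebra.TensorProduct.assoc k k k H H H)
          ((Algebra.TensorProduct.map comul (AlgHom.id k H)) (comul h))
  pentagon :
    (Algebra.TensorProduct.map (AlgHom.id k H)
        (Algebra.TensorProduct.map (AlgHom.id k H) comul)) assoc
      * (Algebra.TensorProduct.assoc k k k H H (H ⊗[k] H))
          ((Algebra.TensorProduct.map comul (AlgHom.id k (H ⊗[k] H))) assoc)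
    = (1 : H) ⊗ₜ[k] assoc
      * (Algebra.TensorProduct.map (AlgHom.id k H)
          ((Algebra.TensorProduct.assoc k k k H H H).toAlgHom.comp
            (Algebra.TensorProduct.map comul (AlgHom.id k H)))) assoc
      * (Algebra.TensorProduct.map (AlgHom.id k H)
          (Algebra.TensorProduct.assoc k k k H H H).toAlgHom)
          ((Algebra.TensorProduct.assoc k k k H (H ⊗[k] H) H) (assoc ⊗ₜ[k] (1 : H)))
  counit_mid :
    (Algebra.TensorProduct.map (AlgHom.id k H)
        ((Algebra.TensorProduct.lid k H).toAlgHom.comp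
          (Algebra.TensorProduct.map counit (AlgHom.id k H)))) assoc = 1

variable {k : Type*} [Field k] {H : Type*} [Ring H] [Algebra k H]

/-- The quasi-antipode axioms for a quasibialgebra. -/
structure IsQuasiAntipode (qb : QuasiBialgebra k H) (S : H →ₗ[k] H) (α β : H) : Prop where
  map_one : S 1 = 1
  map_mul : ∀ a b : H, S (a * b) = S b * S a
  antipode_left : ∀ h : H,
    LinearMap.mul' k H ((TensorProduct.map (LinearMap.mulRight k α ∘ₗ S) LinearMap.id)
      (qb.comul h)) = qb.counit h • α
  antipode_right : ∀ h : H,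
    LinearMap.mul' k H ((TensorProduct.map LinearMap.id (LinearMap.mulLeft k β ∘ₗ S))
      (qb.comul h)) = qb.counit h • β
  assoc_antipode :
    LinearMap.mul' k H ((TensorProduct.map (LinearMap.mulRight k β)
        (LinearMap.mul' k H ∘ₗ TensorProduct.map (LinearMap.mulRight k α ∘ₗ S) LinearMap.id))
      qb.assoc) = 1
  assocInv_antipode :
    LinearMap.mul' k H ((TensorProduct.map (LinearMap.mulRight k α ∘ₗ S)
        (LinearMap.mul' k H ∘ₗ TensorProduct.map (LinearMap.mulRight k β) S))
      qb.assocInv) = 1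

/-- A quasi-Hopf algebra. -/
structure QuasiHopf (k : Type*) [Field k] (H : Type*) [Ring H] [Algebra k H]
    extends QuasiBialgebra k H where
  antipode : H →ₗ[k] H
  alpha : H
  beta : H
  isQuasiAntipode : IsQuasiAntipode toQuasiBialgebra antipode alpha beta

/-- The element `w = Σ S(φ⁻¹⁽¹⁾)·α·φ⁻¹⁽²⁾ ⊗ φ⁻¹⁽³⁾` of `H ⊗ H`. -/
noncomputable def drinfeldW (qh : QuasiHopf k H) : H ⊗[k] H :=
  (LinearMap.rTensor H
      (LinearMap.mul' k H ∘ₗ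
        TensorProduct.map (LinearMap.mulRight k qh.alpha ∘ₗ qh.antipode) LinearMap.id))
    ((TensorProduct.assoc k H H H).symm qh.assocInv)

/-- Drinfeld's canonical map `g ⊗ h ↦ g·S(φ⁻¹⁽¹⁾)·α·φ⁻¹⁽²⁾·h₍₁₎ ⊗ φ⁻¹⁽³⁾·h₍₂₎`. -/
noncomputable def drinfeldCan (qh : QuasiHopf k H) : H ⊗[k] H →ₗ[k] H ⊗[k] H :=
  LinearMap.rTensor H (LinearMap.mul' k H)
    ∘ₗ (TensorProduct.assoc k H H H).symm.toLinearMap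
    ∘ₗ LinearMap.lTensor H (LinearMap.mulLeft k (drinfeldW qh) ∘ₗ qh.comul.toLinearMap)

/-- `h ↦ Σ φ⁽¹⁾·β·S(h₍₁₎·φ⁽²⁾) ⊗ h₍₂₎·φ⁽³⁾`. -/
noncomputable def drinfeldInvAux (qh : QuasiHopf k H) : H →ₗ[k] H ⊗[k] H :=
  LinearMap.rTensor H
      (LinearMap.mul' k H ∘ₗ TensorProduct.map (LinearMap.mulRight k qh.beta) qh.antipode)
    ∘ₗ (TensorProduct.assoc k H H H).symm.toLinearMap
    ∘ₗ LinearMap.mulRight k qh.assoc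
    ∘ₗ (TensorProduct.mk k H (H ⊗[k] H)) 1
    ∘ₗ qh.comul.toLinearMap

/-- The inverse of Drinfeld's canonical map:
`g ⊗ h ↦ g·φ⁽¹⁾·β·S(h₍₁₎·φ⁽²⁾) ⊗ h₍₂₎·φ⁽³⁾`. -/
noncomputable def drinfeldCanInv (qh : QuasiHopf k H) : H ⊗[k] H →ₗ[k] H ⊗[k] H :=
  LinearMap.rTensor H (LinearMap.mul' k H)
    ∘ₗ (TensorProduct.assoc k H H H).symm.toLinearMap
    ∘ₗ LinearMap.lTensor H (drinfeldInvAux qh)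

namespace TensorProduct

variable {R M N P Q : Type*} [CommSemiring R] [AddCommMonoid M] [AddCommMonoid N]
  [AddCommMonoid P] [AddCommMonoid Q] [Module R M] [Module R N] [Module R P] [Module R Q]

@[elab_as_elim]
theorem induction_on₃ {motive : M ⊗[R] (N ⊗[R] P) → Prop} (x : M ⊗[R] (N ⊗[R] P))
    (tmul : ∀ m n p, motive (m ⊗ₜ (n ⊗ₜ p)))
    (add : ∀ x y, motive x → motive y → motive (x + y)) : motive x := by
  induction x with
  | zero => simpa using tmul 0 0 0
  | tmul m y =>
    induction y with
    | zero => simpa using tmul m 0 0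
    | tmul n p => exact tmul m n p
    | add y z hy hz => rw [tmul_add]; exact add _ _ hy hz
  | add x y hx hy => exact add x y hx hy

@[elab_as_elim]
theorem induction_on₄ {motive : M ⊗[R] (N ⊗[R] (P ⊗[R] Q)) → Prop}
    (x : M ⊗[R] (N ⊗[R] (P ⊗[R] Q)))
    (tmul : ∀ m n p q, motive (m ⊗ₜ (n ⊗ₜ (p ⊗ₜ q))))
    (add : ∀ x y, motive x → motive y → motive (x + y)) : motive x := by
  induction x using induction_on₃ with
  | tmul m n y =>
    induction y with
    | zero => simpa using tmul m n 0 0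
    | tmul p q => exact tmul m n p q
    | add y z hy hz => rw [tmul_add, tmul_add]; exact add _ _ hy hz
  | add x y hx hy => exact add x y hx hy

end TensorProduct

section LeftExtend

variable {R A : Type*} [CommSemiring R] [Semiring A] [Algebra R A]

noncomputable def leftExtend (f : A →ₗ[R] A ⊗[R] A) : A ⊗[R] A →ₗ[R] A ⊗[R] A :=
  LinearMap.rTensor A (LinearMap.mul' R A)
    ∘ₗ (TensorProduct.assoc R A A A).symm.toLinearMap
    ∘ₗ LinearMap.lTensor A f

theorem leftExtend_tmul (f : A →ₗ[R] A ⊗[R] A) (g h : A) :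
    leftExtend f (g ⊗ₜ h) = (g ⊗ₜ 1) * f h := by
  suffices ∀ z : A ⊗[R] A, LinearMap.rTensor A (LinearMap.mul' R A)
      ((TensorProduct.assoc R A A A).symm (g ⊗ₜ z)) = (g ⊗ₜ 1) * z from this (f h)
  intro z
  induction z with
  | zero => simp
  | tmul p q => simp [Algebra.TensorProduct.tmul_mul_tmul]
  | add x y hx hy => simp only [tmul_add, map_add, mul_add, hx, hy]

theorem leftExtend_tmul_one_mul (f : A →ₗ[R] A ⊗[R] A) (g : A) (z : A ⊗[R] A) :
    leftExtend f ((g ⊗ₜ 1) * z) = (g ⊗ₜ 1) * leftExtend f z := by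
  induction z with
  | zero => simp
  | tmul p q =>
    rw [Algebra.TensorProduct.tmul_mul_tmul, one_mul, leftExtend_tmul, leftExtend_tmul, ← mul_assoc,
      Algebra.TensorProduct.tmul_mul_tmul, one_mul]
  | add x y hx hy => simp only [mul_add, map_add, hx, hy]

theorem leftExtend_comp_leftExtend {f g : A →ₗ[R] A ⊗[R] A}
    (h : ∀ a, leftExtend g (f a) = 1 ⊗ₜ a) : leftExtend g ∘ₗ leftExtend f = LinearMap.id := by
  ext a b
  simp [leftExtend_tmul, leftExtend_tmul_one_mul, h, Algebra.TensorProduct.tmul_mul_tmul]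

end LeftExtend

section Contract

variable {R A : Type*} [CommSemiring R] [Semiring A] [Algebra R A]

noncomputable def contract (μ : A ⊗[R] A →ₗ[R] A) (ν : A →ₗ[R] A) :
    A ⊗[R] (A ⊗[R] (A ⊗[R] A)) →ₗ[R] A ⊗[R] A :=
  LinearMap.rTensor A (LinearMap.mul' R A ∘ₗ TensorProduct.map μ ν)
    ∘ₗ (TensorProduct.assoc R (A ⊗[R] A) A A).symm.toLinearMap
    ∘ₗ (TensorProduct.assoc R A A (A ⊗[R] A)).symm.toLinearMap

variable (μ : A ⊗[R] A →ₗ[R] A) (ν : A →ₗ[R] A)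

@[simp]
theorem contract_tmul (a b c d : A) :
    contract μ ν (a ⊗ₜ (b ⊗ₜ (c ⊗ₜ d))) = (μ (a ⊗ₜ b) * ν c) ⊗ₜ d := by
  simp [contract]

theorem contract_tmul_tmul (a b : A) (z : A ⊗[R] A) :
    contract μ ν (a ⊗ₜ (b ⊗ₜ z)) = (μ (a ⊗ₜ b) ⊗ₜ 1) * LinearMap.rTensor A ν z := by
  induction z with
  | zero => simp
  | tmul c d => simp [Algebra.TensorProduct.tmul_mul_tmul]
  | add x y hx hy => simp only [tmul_add, map_add, mul_add, hx, hy]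

theorem contract_assoc_tmul (x : A ⊗[R] A) (c d : A) :
    contract μ ν (Algebra.TensorProduct.assoc R R R A A (A ⊗[R] A) (x ⊗ₜ (c ⊗ₜ d)))
      = (μ x * ν c) ⊗ₜ d := by
  induction x with
  | zero => simp
  | tmul a b => simp
  | add x y hx hy => simp only [add_tmul, map_add, add_mul, hx, hy]

theorem contract_tmul_assoc {μ₁ μ₂ : A → A} {ρ : A ⊗[R] A →ₗ[R] A}
    (hμ : ∀ a b, μ (a ⊗ₜ b) = μ₁ a * μ₂ b) (hρ : ∀ b c, ρ (b ⊗ₜ c) = μ₂ b * ν c)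
    (a : A) (x : A ⊗[R] A) (d : A) :
    contract μ ν (a ⊗ₜ Algebra.TensorProduct.assoc R R R A A A (x ⊗ₜ d)) = (μ₁ a * ρ x) ⊗ₜ d := by
  induction x with
  | zero => simp
  | tmul b c => simp [hμ, hρ, mul_assoc]
  | add x y hx hy => simp only [add_tmul, tmul_add, map_add, mul_add, hx, hy]

end Contract

open Algebra.TensorProduct (includeRight)

section Legs

variable {R A : Type*} [CommSemiring R] [Semiring A] [Algebra R A]

noncomputable def appendOne : A ⊗[R] (A ⊗[R] A) →ₐ[R] A ⊗[R] (A ⊗[R] (A ⊗[R] A)) :=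
  (Algebra.TensorProduct.map (AlgHom.id R A)
      (Algebra.TensorProduct.assoc R R R A A A).toAlgHom).comp
    ((Algebra.TensorProduct.assoc R R R A (A ⊗[R] A) A).toAlgHom.comp
      Algebra.TensorProduct.includeLeft)

noncomputable def includeOuter : A ⊗[R] A →ₐ[R] A ⊗[R] (A ⊗[R] (A ⊗[R] A)) :=
  Algebra.TensorProduct.map (AlgHom.id R A) (includeRight.comp includeRight)

@[simp]
theorem appendOne_tmul (a b c : A) :
    appendOne (a ⊗ₜ[R] (b ⊗ₜ[R] c)) = a ⊗ₜ (b ⊗ₜ (c ⊗ₜ 1)) := by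
  simp [appendOne]

@[simp]
theorem includeOuter_tmul (a b : A) :
    includeOuter (a ⊗ₜ[R] b) = a ⊗ₜ ((1 : A) ⊗ₜ ((1 : A) ⊗ₜ b)) := by
  simp [includeOuter]

end Legs

-- Without this shortcut, instance search fails on `LeftDistribClass` of the fourfold tensor
-- product.
noncomputable instance : Ring (H ⊗[k] (H ⊗[k] (H ⊗[k] H))) := inferInstance

namespace QuasiBialgebra

variable (qb : QuasiBialgebra k H)

noncomputable def counitTensor (B : Type*) [Ring B] [Algebra k B] : H ⊗[k] B →ₐ[k] B :=
  (Algebra.TensorProduct.lid k B).toAlgHom.comp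
    (Algebra.TensorProduct.map qb.counit (AlgHom.id k B))

noncomputable def counitMid : H ⊗[k] (H ⊗[k] H) →ₐ[k] H ⊗[k] H :=
  Algebra.TensorProduct.map (AlgHom.id k H) (qb.counitTensor H)

noncomputable def comulAt₁ : H ⊗[k] (H ⊗[k] H) →ₐ[k] H ⊗[k] (H ⊗[k] (H ⊗[k] H)) :=
  (Algebra.TensorProduct.assoc k k k H H (H ⊗[k] H)).toAlgHom.comp
    (Algebra.TensorProduct.map qb.comul (AlgHom.id k (H ⊗[k] H)))

noncomputable def comulAt₂ : H ⊗[k] (H ⊗[k] H) →ₐ[k] H ⊗[k] (H ⊗[k] (H ⊗[k] H)) :=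
  Algebra.TensorProduct.map (AlgHom.id k H)
    ((Algebra.TensorProduct.assoc k k k H H H).toAlgHom.comp
      (Algebra.TensorProduct.map qb.comul (AlgHom.id k H)))

noncomputable def comulAt₃ : H ⊗[k] (H ⊗[k] H) →ₐ[k] H ⊗[k] (H ⊗[k] (H ⊗[k] H)) :=
  Algebra.TensorProduct.map (AlgHom.id k H) (Algebra.TensorProduct.map (AlgHom.id k H) qb.comul)

@[simp]
theorem counitTensor_tmul {B : Type*} [Ring B] [Algebra k B] (a : H) (b : B) :
    qb.counitTensor B (a ⊗ₜ b) = qb.counit a • b := by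
  simp [counitTensor]

@[simp]
theorem counitMid_tmul (a : H) (x : H ⊗[k] H) :
    qb.counitMid (a ⊗ₜ x) = a ⊗ₜ qb.counitTensor H x := by
  simp [counitMid]

@[simp]
theorem comulAt₁_tmul (a : H) (m : H ⊗[k] H) :
    qb.comulAt₁ (a ⊗ₜ m) = Algebra.TensorProduct.assoc k k k H H (H ⊗[k] H) (qb.comul a ⊗ₜ m) := by
  simp [comulAt₁]

@[simp]
theorem comulAt₂_tmul (a b c : H) :
    qb.comulAt₂ (a ⊗ₜ (b ⊗ₜ c))
      = a ⊗ₜ Algebra.TensorProduct.assoc k k k H H H (qb.comul b ⊗ₜ c) := by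
  simp [comulAt₂]

@[simp]
theorem comulAt₃_tmul (a b c : H) :
    qb.comulAt₃ (a ⊗ₜ (b ⊗ₜ c)) = a ⊗ₜ (b ⊗ₜ qb.comul c) := by
  simp [comulAt₃]

theorem comulAt₂_one_tmul (x : H ⊗[k] H) :
    qb.comulAt₂ (1 ⊗ₜ x)
      = includeRight (Algebra.TensorProduct.assoc k k k H H H
          (Algebra.TensorProduct.map qb.comul (AlgHom.id k H) x)) := by
  simp [comulAt₂]

theorem counitTensor_comul (h : H) : qb.counitTensor H (qb.comul h) = h := by
  convert qb.counit_comul_left h using 1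
  induction qb.comul h with
  | zero => simp
  | tmul a b => simp
  | add x y hx hy => simp only [map_add, hx, hy]

theorem map_assocInv_eq_one {B : Type*} [Ring B] [Algebra k B] (F : H ⊗[k] (H ⊗[k] H) →ₐ[k] B)
    (hF : F qb.assoc = 1) : F qb.assocInv = 1 := by
  simpa [hF] using congrArg F qb.assoc_mul_inv

theorem counitMid_assoc : qb.counitMid qb.assoc = 1 := qb.counit_mid

theorem counitMid_assocInv : qb.counitMid qb.assocInv = 1 :=
  qb.map_assocInv_eq_one _ qb.counitMid_assoc

theorem counitTensor_assoc_tmul (d : H ⊗[k] H) (c : H) :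
    qb.counitTensor (H ⊗[k] H) (Algebra.TensorProduct.assoc k k k H H H (d ⊗ₜ c))
      = qb.counitTensor H d ⊗ₜ c := by
  induction d with
  | zero => simp
  | tmul a b => simp [TensorProduct.smul_tmul']
  | add x y hx hy => simp only [add_tmul, map_add, hx, hy]

noncomputable def counitTensorTwice : H ⊗[k] (H ⊗[k] (H ⊗[k] H)) →ₐ[k] H ⊗[k] H :=
  (qb.counitTensor (H ⊗[k] H)).comp
    (Algebra.TensorProduct.map (AlgHom.id k H) (qb.counitTensor (H ⊗[k] H)))

@[simp]
theorem counitTensorTwice_tmul (a b : H) (y : H ⊗[k] H) :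
    qb.counitTensorTwice (a ⊗ₜ (b ⊗ₜ y)) = qb.counit a • qb.counit b • y := by
  simp [counitTensorTwice, smul_comm (qb.counit a)]

theorem counitTensorTwice_comulAt₁ (x : H ⊗[k] (H ⊗[k] H)) :
    qb.counitTensorTwice (qb.comulAt₁ x) = qb.counitTensor (H ⊗[k] H) x := by
  suffices ∀ (d y : H ⊗[k] H), qb.counitTensorTwice
      (Algebra.TensorProduct.assoc k k k H H (H ⊗[k] H) (d ⊗ₜ y))
        = qb.counit (qb.counitTensor H d) • y by
    induction x with
    | zero => simp
    | tmul a y => simp [this, counitTensor_comul]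
    | add x y hx hy => simp only [map_add, hx, hy]
  intro d y
  induction d with
  | zero => simp
  | tmul a b => simp [smul_smul]
  | add x z hx hz => simp only [add_tmul, map_add, add_smul, hx, hz]

theorem counitTensorTwice_comulAt₂ (x : H ⊗[k] (H ⊗[k] H)) :
    qb.counitTensorTwice (qb.comulAt₂ x) = qb.counitTensor (H ⊗[k] H) x := by
  induction x using TensorProduct.induction_on₃ with
  | tmul a b c => simp [counitTensorTwice, counitTensor_assoc_tmul, counitTensor_comul]
  | add x y hx hy => simp only [map_add, hx, hy]

theorem counitTensorTwice_comulAt₃ (x : H ⊗[k] (H ⊗[k] H)) :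
    qb.counitTensorTwice (qb.comulAt₃ x) = qb.comul (qb.counitTensor H (qb.counitMid x)) := by
  induction x using TensorProduct.induction_on₃ with
  | tmul a b c => simp [smul_smul, mul_comm]
  | add x y hx hy => simp only [map_add, hx, hy]

theorem counitTensorTwice_includeRight (x : H ⊗[k] (H ⊗[k] H)) :
    qb.counitTensorTwice (includeRight x) = qb.counitTensor (H ⊗[k] H) x := by
  induction x with
  | zero => simp
  | tmul a y => simp
  | add x y hx hy => simp only [map_add, hx, hy]

theorem counitTensorTwice_appendOne (x : H ⊗[k] (H ⊗[k] H)) :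
    qb.counitTensorTwice (appendOne x) = qb.counitTensor H (qb.counitMid x) ⊗ₜ 1 := by
  induction x using TensorProduct.induction_on₃ with
  | tmul a b c => simp [smul_smul, TensorProduct.smul_tmul', mul_comm]
  | add x y hx hy => simp only [map_add, add_tmul, hx, hy]

theorem pentagon_legs :
    qb.comulAt₃ qb.assoc * qb.comulAt₁ qb.assoc
      = includeRight qb.assoc * qb.comulAt₂ qb.assoc * appendOne qb.assoc :=
  qb.pentagon

theorem counitTensor_assoc : qb.counitTensor (H ⊗[k] H) qb.assoc = 1 := by
  set X := qb.counitTensor (H ⊗[k] H) qb.assoc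
  have hX : X * X = X := by
    have h := congrArg qb.counitTensorTwice qb.pentagon_legs
    rw [map_mul, map_mul, map_mul, counitTensorTwice_comulAt₃, counitTensorTwice_comulAt₁,
      counitTensorTwice_includeRight, counitTensorTwice_comulAt₂, counitTensorTwice_appendOne,
      counitMid_assoc, map_one, map_one, ← Algebra.TensorProduct.one_def, one_mul, mul_one] at h
    exact h.symm
  have hinv : X * qb.counitTensor (H ⊗[k] H) qb.assocInv = 1 := by
    rw [← map_mul, qb.assoc_mul_inv, map_one]
  calc X = X * X * qb.counitTensor (H ⊗[k] H) qb.assocInv := by rw [mul_assoc, hinv, mul_one]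
    _ = 1 := by rw [hX, hinv]

theorem counitTensor_assocInv : qb.counitTensor (H ⊗[k] H) qb.assocInv = 1 :=
  qb.map_assocInv_eq_one _ qb.counitTensor_assoc

def assocUnit : (H ⊗[k] (H ⊗[k] H))ˣ :=
  ⟨qb.assoc, qb.assocInv, qb.assoc_mul_inv, qb.inv_mul_assoc⟩

def mapAssocUnit {B : Type*} [Ring B] [Algebra k B] (F : H ⊗[k] (H ⊗[k] H) →ₐ[k] B) : Bˣ :=
  Units.map F.toMonoidHom qb.assocUnit

theorem pentagon_units :
    qb.mapAssocUnit qb.comulAt₃ * qb.mapAssocUnit qb.comulAt₁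
      = qb.mapAssocUnit includeRight * qb.mapAssocUnit qb.comulAt₂ * qb.mapAssocUnit appendOne :=
  Units.ext qb.pentagon_legs

theorem comulAt₃_assocInv_mul_includeRight_assoc :
    qb.comulAt₃ qb.assocInv * includeRight qb.assoc
      = qb.comulAt₁ qb.assoc * (appendOne qb.assocInv * qb.comulAt₂ qb.assocInv) :=
  congrArg Units.val (show (qb.mapAssocUnit qb.comulAt₃)⁻¹ * qb.mapAssocUnit includeRight
      = qb.mapAssocUnit qb.comulAt₁
        * ((qb.mapAssocUnit appendOne)⁻¹ * (qb.mapAssocUnit qb.comulAt₂)⁻¹) by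
    rw [inv_mul_eq_iff_eq_mul, ← mul_assoc, ← mul_assoc, qb.pentagon_units]; group)

theorem includeRight_assocInv_mul_comulAt₃_assoc :
    includeRight qb.assocInv * qb.comulAt₃ qb.assoc
      = qb.comulAt₂ qb.assoc * (appendOne qb.assoc * qb.comulAt₁ qb.assocInv) :=
  congrArg Units.val (show (qb.mapAssocUnit includeRight)⁻¹ * qb.mapAssocUnit qb.comulAt₃
      = qb.mapAssocUnit qb.comulAt₂
        * (qb.mapAssocUnit appendOne * (qb.mapAssocUnit qb.comulAt₁)⁻¹) by
    rw [inv_mul_eq_iff_eq_mul, ← mul_assoc, ← mul_assoc, ← qb.pentagon_units]; group)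

theorem assocInv_mul_comul_comul (h : H) :
    qb.assocInv * Algebra.TensorProduct.map (AlgHom.id k H) qb.comul (qb.comul h)
      = Algebra.TensorProduct.assoc k k k H H H
          (Algebra.TensorProduct.map qb.comul (AlgHom.id k H) (qb.comul h)) * qb.assocInv := by
  change (↑qb.assocUnit⁻¹ : H ⊗[k] (H ⊗[k] H)) * _ = _ * ↑qb.assocUnit⁻¹
  rw [Units.inv_mul_eq_iff_eq_mul, ← mul_assoc, Units.eq_mul_inv_iff_mul_eq]
  exact qb.quasi_coassoc h

end QuasiBialgebra

namespace QuasiHopf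

variable (qh : QuasiHopf k H)

open QuasiBialgebra

theorem antipode_mul (a b : H) : qh.antipode (a * b) = qh.antipode b * qh.antipode a :=
  qh.isQuasiAntipode.map_mul a b

noncomputable def alphaPairing : H ⊗[k] H →ₗ[k] H :=
  LinearMap.mul' k H ∘ₗ
    TensorProduct.map (LinearMap.mulRight k qh.alpha ∘ₗ qh.antipode) LinearMap.id

noncomputable def betaPairing : H ⊗[k] H →ₗ[k] H :=
  LinearMap.mul' k H ∘ₗ TensorProduct.map (LinearMap.mulRight k qh.beta) qh.antipode

@[simp]
theorem alphaPairing_tmul (a b : H) :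
    qh.alphaPairing (a ⊗ₜ b) = qh.antipode a * qh.alpha * b := by
  simp [alphaPairing]

@[simp]
theorem betaPairing_tmul (a b : H) :
    qh.betaPairing (a ⊗ₜ b) = a * qh.beta * qh.antipode b := by
  simp [betaPairing]

theorem alphaPairing_comul (a : H) : qh.alphaPairing (qh.comul a) = qh.counit a • qh.alpha :=
  qh.isQuasiAntipode.antipode_left a

theorem betaPairing_comul (a : H) : qh.betaPairing (qh.comul a) = qh.counit a • qh.beta := by
  have h : qh.betaPairing
      = LinearMap.mul' k H ∘ₗ
          TensorProduct.map LinearMap.id (LinearMap.mulLeft k qh.beta ∘ₗ qh.antipode) :=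
    TensorProduct.ext' fun b c => by simp [mul_assoc]
  rw [h]
  exact qh.isQuasiAntipode.antipode_right a

theorem alphaPairing_comul_mul (a : H) (x : H ⊗[k] H) :
    qh.alphaPairing (qh.comul a * x) = qh.counit a • qh.alphaPairing x := by
  induction x with
  | zero => simp
  | tmul p q =>
    have h (d : H ⊗[k] H) :
        qh.alphaPairing (d * p ⊗ₜ q) = qh.antipode p * qh.alphaPairing d * q := by
      induction d with
      | zero => simp
      | tmul b c => simp [Algebra.TensorProduct.tmul_mul_tmul, antipode_mul, mul_assoc]
      | add x y hx hy => simp only [add_mul, mul_add, map_add, hx, hy]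
    rw [h, alphaPairing_comul]
    simp [mul_assoc]
  | add x y hx hy => simp only [mul_add, map_add, smul_add, hx, hy]

theorem betaPairing_mul_comul (a : H) (x : H ⊗[k] H) :
    qh.betaPairing (x * qh.comul a) = qh.counit a • qh.betaPairing x := by
  induction x with
  | zero => simp
  | tmul p q =>
    have h (d : H ⊗[k] H) :
        qh.betaPairing (p ⊗ₜ q * d) = p * qh.betaPairing d * qh.antipode q := by
      induction d with
      | zero => simp
      | tmul b c => simp [Algebra.TensorProduct.tmul_mul_tmul, antipode_mul, mul_assoc]
      | add x y hx hy => simp only [add_mul, mul_add, map_add, hx, hy]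
    rw [h, betaPairing_comul]
    simp [mul_assoc]
  | add x y hx hy => simp only [add_mul, map_add, smul_add, hx, hy]

noncomputable def alphaBetaContract : H ⊗[k] (H ⊗[k] (H ⊗[k] H)) →ₗ[k] H ⊗[k] H :=
  contract qh.alphaPairing (LinearMap.mulLeft k qh.beta ∘ₗ qh.antipode)

noncomputable def betaAlphaContract : H ⊗[k] (H ⊗[k] (H ⊗[k] H)) →ₗ[k] H ⊗[k] H :=
  contract (LinearMap.mulRight k qh.alpha ∘ₗ qh.betaPairing) LinearMap.id

noncomputable def alphaBetaTriple : H ⊗[k] (H ⊗[k] H) →ₗ[k] H :=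
  LinearMap.mul' k H ∘ₗ TensorProduct.map (LinearMap.mulRight k qh.alpha ∘ₗ qh.antipode)
    (LinearMap.mul' k H ∘ₗ TensorProduct.map (LinearMap.mulRight k qh.beta) qh.antipode)

noncomputable def betaAlphaTriple : H ⊗[k] (H ⊗[k] H) →ₗ[k] H :=
  LinearMap.mul' k H ∘ₗ TensorProduct.map (LinearMap.mulRight k qh.beta)
    (LinearMap.mul' k H ∘ₗ
      TensorProduct.map (LinearMap.mulRight k qh.alpha ∘ₗ qh.antipode) LinearMap.id)

theorem alphaBetaTriple_assocInv : qh.alphaBetaTriple qh.assocInv = 1 :=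
  qh.isQuasiAntipode.assocInv_antipode

theorem betaAlphaTriple_assoc : qh.betaAlphaTriple qh.assoc = 1 :=
  qh.isQuasiAntipode.assoc_antipode

theorem alphaBetaContract_comulAt₁_mul (t : H ⊗[k] (H ⊗[k] H))
    (E : H ⊗[k] (H ⊗[k] (H ⊗[k] H))) :
    qh.alphaBetaContract (qh.comulAt₁ t * E)
      = qh.alphaBetaContract (includeRight (includeRight (qh.counitTensor (H ⊗[k] H) t)) * E) := by
  induction t using TensorProduct.induction_on₃ with
  | tmul a b c =>
    induction E using TensorProduct.induction_on₄ with
    | tmul e₁ e₂ e₃ e₄ =>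
      have hE : e₁ ⊗ₜ[k] (e₂ ⊗ₜ[k] (e₃ ⊗ₜ[k] e₄))
          = Algebra.TensorProduct.assoc k k k H H (H ⊗[k] H) ((e₁ ⊗ₜ e₂) ⊗ₜ (e₃ ⊗ₜ e₄)) := rfl
      rw [comulAt₁_tmul, hE, ← map_mul,
        Algebra.TensorProduct.tmul_mul_tmul, Algebra.TensorProduct.tmul_mul_tmul,
        alphaBetaContract, contract_assoc_tmul, alphaPairing_comul_mul]
      simp [Algebra.TensorProduct.tmul_mul_tmul, TensorProduct.smul_tmul', mul_assoc]
    | add x y hx hy => simp only [mul_add, map_add, hx, hy]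
  | add x y hx hy => simp only [map_add, add_mul, hx, hy]

theorem alphaBetaContract_mul_comulAt₂ (E : H ⊗[k] (H ⊗[k] (H ⊗[k] H)))
    (t : H ⊗[k] (H ⊗[k] H)) :
    qh.alphaBetaContract (E * qh.comulAt₂ t)
      = qh.alphaBetaContract (E * includeOuter (qh.counitMid t)) := by
  have hμ (a b : H) : qh.alphaPairing (a ⊗ₜ b) = (qh.antipode a * qh.alpha) * id b := by simp
  have hρ (b c : H) : qh.betaPairing (b ⊗ₜ c) = id b * (qh.beta * qh.antipode c) := by
    simp [mul_assoc]
  induction t using TensorProduct.induction_on₃ with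
  | tmul a b c =>
    induction E using TensorProduct.induction_on₄ with
    | tmul e₁ e₂ e₃ e₄ =>
      have hE : e₁ ⊗ₜ[k] (e₂ ⊗ₜ[k] (e₃ ⊗ₜ[k] e₄))
          = e₁ ⊗ₜ Algebra.TensorProduct.assoc k k k H H H ((e₂ ⊗ₜ e₃) ⊗ₜ e₄) := rfl
      rw [comulAt₂_tmul, hE, Algebra.TensorProduct.tmul_mul_tmul, ← map_mul,
        Algebra.TensorProduct.tmul_mul_tmul, alphaBetaContract, contract_tmul_assoc _ _ hμ hρ,
        betaPairing_mul_comul]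
      simp [Algebra.TensorProduct.tmul_mul_tmul, TensorProduct.smul_tmul', mul_assoc]
    | add x y hx hy => simp only [add_mul, map_add, hx, hy]
  | add x y hx hy => simp only [map_add, mul_add, hx, hy]

theorem alphaBetaContract_appendOne_mul_includeOuter (t : H ⊗[k] (H ⊗[k] H)) (q : H) :
    qh.alphaBetaContract (appendOne t * includeOuter (1 ⊗ₜ q)) = qh.alphaBetaTriple t ⊗ₜ q := by
  induction t using TensorProduct.induction_on₃ with
  | tmul a b c =>
    simp [alphaBetaContract, alphaBetaTriple, Algebra.TensorProduct.tmul_mul_tmul, mul_assoc]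
  | add x y hx hy => simp only [map_add, add_mul, add_tmul, hx, hy]

theorem betaAlphaContract_comulAt₂_mul (t : H ⊗[k] (H ⊗[k] H))
    (E : H ⊗[k] (H ⊗[k] (H ⊗[k] H))) :
    qh.betaAlphaContract (qh.comulAt₂ t * E)
      = qh.betaAlphaContract (includeOuter (qh.counitMid t) * E) := by
  have hμ (a b : H) : (LinearMap.mulRight k qh.alpha ∘ₗ qh.betaPairing) (a ⊗ₜ b)
      = (a * qh.beta) * (qh.antipode b * qh.alpha) := by simp [mul_assoc]
  have hρ (b c : H) :
      qh.alphaPairing (b ⊗ₜ c) = (qh.antipode b * qh.alpha) * (LinearMap.id : H →ₗ[k] H) c := by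
    simp
  induction t using TensorProduct.induction_on₃ with
  | tmul a b c =>
    induction E using TensorProduct.induction_on₄ with
    | tmul e₁ e₂ e₃ e₄ =>
      have hE : e₁ ⊗ₜ[k] (e₂ ⊗ₜ[k] (e₃ ⊗ₜ[k] e₄))
          = e₁ ⊗ₜ Algebra.TensorProduct.assoc k k k H H H ((e₂ ⊗ₜ e₃) ⊗ₜ e₄) := rfl
      rw [comulAt₂_tmul, hE, Algebra.TensorProduct.tmul_mul_tmul, ← map_mul,
        Algebra.TensorProduct.tmul_mul_tmul, betaAlphaContract, contract_tmul_assoc _ _ hμ hρ,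
        alphaPairing_comul_mul]
      simp [Algebra.TensorProduct.tmul_mul_tmul, TensorProduct.smul_tmul', mul_assoc]
    | add x y hx hy => simp only [mul_add, map_add, hx, hy]
  | add x y hx hy => simp only [map_add, add_mul, hx, hy]

theorem betaAlphaContract_mul_comulAt₁ (E : H ⊗[k] (H ⊗[k] (H ⊗[k] H)))
    (t : H ⊗[k] (H ⊗[k] H)) :
    qh.betaAlphaContract (E * qh.comulAt₁ t)
      = qh.betaAlphaContract (E * includeRight (includeRight (qh.counitTensor (H ⊗[k] H) t))) := by
  induction t using TensorProduct.induction_on₃ with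
  | tmul a b c =>
    induction E using TensorProduct.induction_on₄ with
    | tmul e₁ e₂ e₃ e₄ =>
      have hE : e₁ ⊗ₜ[k] (e₂ ⊗ₜ[k] (e₃ ⊗ₜ[k] e₄))
          = Algebra.TensorProduct.assoc k k k H H (H ⊗[k] H) ((e₁ ⊗ₜ e₂) ⊗ₜ (e₃ ⊗ₜ e₄)) := rfl
      rw [comulAt₁_tmul, hE, ← map_mul,
        Algebra.TensorProduct.tmul_mul_tmul, Algebra.TensorProduct.tmul_mul_tmul,
        betaAlphaContract, contract_assoc_tmul, LinearMap.comp_apply, betaPairing_mul_comul]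
      simp [Algebra.TensorProduct.tmul_mul_tmul, TensorProduct.smul_tmul', mul_assoc]
    | add x y hx hy => simp only [add_mul, map_add, hx, hy]
  | add x y hx hy => simp only [map_add, mul_add, hx, hy]

theorem betaAlphaContract_includeOuter_mul_appendOne (q : H) (t : H ⊗[k] (H ⊗[k] H)) :
    qh.betaAlphaContract (includeOuter (1 ⊗ₜ q) * appendOne t) = qh.betaAlphaTriple t ⊗ₜ q := by
  induction t using TensorProduct.induction_on₃ with
  | tmul a b c =>
    simp [betaAlphaContract, betaAlphaTriple, Algebra.TensorProduct.tmul_mul_tmul, mul_assoc]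
  | add x y hx hy => simp only [map_add, mul_add, add_tmul, hx, hy]

-- `drinfeldW qh` and `drinfeldInvAux qh` are `qh.drinfeldWOf qh.assocInv` and
-- `qh.drinfeldInvAuxOf qh.assoc`; freeing `φ⁻¹` and `φ` lets the two lemmas below reduce to
-- pure tensors.
noncomputable def drinfeldWOf : H ⊗[k] (H ⊗[k] H) →ₗ[k] H ⊗[k] H :=
  LinearMap.rTensor H qh.alphaPairing ∘ₗ (TensorProduct.assoc k H H H).symm.toLinearMap

noncomputable def drinfeldInvAuxOf (t : H ⊗[k] (H ⊗[k] H)) : H →ₗ[k] H ⊗[k] H :=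
  LinearMap.rTensor H qh.betaPairing ∘ₗ (TensorProduct.assoc k H H H).symm.toLinearMap
    ∘ₗ LinearMap.mulRight k t ∘ₗ (TensorProduct.mk k H (H ⊗[k] H)) 1 ∘ₗ qh.comul.toLinearMap

@[simp]
theorem drinfeldWOf_tmul (a b c : H) :
    qh.drinfeldWOf (a ⊗ₜ (b ⊗ₜ c)) = (qh.antipode a * qh.alpha * b) ⊗ₜ c := by
  simp [drinfeldWOf]

theorem rTensor_betaPairing_assoc_symm_tmul (a : H) (z : H ⊗[k] H) :
    LinearMap.rTensor H qh.betaPairing ((TensorProduct.assoc k H H H).symm (a ⊗ₜ z))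
      = (a ⊗ₜ 1) * LinearMap.rTensor H (LinearMap.mulLeft k qh.beta ∘ₗ qh.antipode) z := by
  induction z with
  | zero => simp
  | tmul b c => simp [Algebra.TensorProduct.tmul_mul_tmul, mul_assoc]
  | add x y hx hy => simp only [tmul_add, map_add, mul_add, hx, hy]

theorem leftExtend_drinfeldInvAuxOf_drinfeldWOf_mul (s t : H ⊗[k] (H ⊗[k] H)) (d : H ⊗[k] H) :
    leftExtend (qh.drinfeldInvAuxOf t) (qh.drinfeldWOf s * d)
      = qh.alphaBetaContract (qh.comulAt₃ s
          * includeRight (Algebra.TensorProduct.map (AlgHom.id k H) qh.comul d * t)) := by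
  induction s using TensorProduct.induction_on₃ with
  | tmul s₁ s₂ s₃ =>
    induction d with
    | zero => simp
    | tmul g u =>
      rw [drinfeldWOf_tmul, Algebra.TensorProduct.tmul_mul_tmul, leftExtend_tmul]
      simp only [drinfeldInvAuxOf, LinearMap.coe_comp, Function.comp_apply,
        AlgHom.toLinearMap_apply, TensorProduct.mk_apply, LinearMap.mulRight_apply,
        LinearEquiv.coe_coe]
      induction t with
      | zero => simp
      | tmul t₁ m =>
        simp only [Algebra.TensorProduct.tmul_mul_tmul, one_mul, mul_one,
          rTensor_betaPairing_assoc_symm_tmul, comulAt₃_tmul,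
          Algebra.TensorProduct.map_tmul, AlgHom.coe_id, id_eq,
          Algebra.TensorProduct.includeRight_apply, alphaBetaContract, contract_tmul_tmul, map_mul,
          alphaPairing_tmul, ← mul_assoc]
      | add x y hx hy => simp only [mul_add, map_add, hx, hy]
    | add x y hx hy => simp only [map_add, mul_add, add_mul, hx, hy]
  | add x y hx hy => simp only [map_add, add_mul, hx, hy]

theorem leftExtend_mulLeft_drinfeldWOf_rTensor_betaPairing (s t : H ⊗[k] (H ⊗[k] H))
    (d : H ⊗[k] H) :
    leftExtend (LinearMap.mulLeft k (qh.drinfeldWOf s) ∘ₗ qh.comul.toLinearMap)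
        (LinearMap.rTensor H qh.betaPairing ((TensorProduct.assoc k H H H).symm ((1 ⊗ₜ d) * t)))
      = qh.betaAlphaContract (includeRight
          (s * Algebra.TensorProduct.map (AlgHom.id k H) qh.comul d) * qh.comulAt₃ t) := by
  induction d with
  | zero => simp
  | tmul a b =>
    induction t using TensorProduct.induction_on₃ with
    | tmul t₁ t₂ t₃ =>
      simp only [Algebra.TensorProduct.tmul_mul_tmul, one_mul, TensorProduct.assoc_symm_tmul,
        LinearMap.rTensor_tmul, betaPairing_tmul, leftExtend_tmul, LinearMap.coe_comp,
        Function.comp_apply, AlgHom.toLinearMap_apply, LinearMap.mulLeft_apply]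
      induction s using TensorProduct.induction_on₃ with
      | tmul s₁ s₂ s₃ =>
        simp only [drinfeldWOf_tmul, Algebra.TensorProduct.tmul_mul_tmul, one_mul,
          comulAt₃_tmul, Algebra.TensorProduct.map_tmul, AlgHom.coe_id, id_eq,
          Algebra.TensorProduct.includeRight_apply, betaAlphaContract, contract_tmul_tmul,
          LinearMap.rTensor_id, LinearMap.id_apply, LinearMap.coe_comp, Function.comp_apply,
          LinearMap.mulRight_apply, betaPairing_tmul, map_mul, antipode_mul, ← mul_assoc]
      | add x y hx hy => simp only [map_add, add_mul, mul_add, hx, hy]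
    | add x y hx hy => simp only [map_add, mul_add, hx, hy]
  | add x y hx hy => simp only [tmul_add, add_mul, mul_add, map_add, hx, hy]

theorem drinfeldCanInv_drinfeldW_mul_comul (h : H) :
    drinfeldCanInv qh (drinfeldW qh * qh.comul h) = 1 ⊗ₜ h := by
  calc drinfeldCanInv qh (drinfeldW qh * qh.comul h)
      = qh.alphaBetaContract (qh.comulAt₃ qh.assocInv * includeRight
          (Algebra.TensorProduct.map (AlgHom.id k H) qh.comul (qh.comul h) * qh.assoc)) :=
        qh.leftExtend_drinfeldInvAuxOf_drinfeldWOf_mul _ _ _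
    _ = qh.alphaBetaContract (qh.comulAt₁ qh.assoc * (appendOne qh.assocInv
          * qh.comulAt₂ (qh.assocInv * (1 ⊗ₜ qh.comul h)))) := by
        rw [qh.quasi_coassoc, map_mul includeRight, ← mul_assoc,
          comulAt₃_assocInv_mul_includeRight_assoc, ← comulAt₂_one_tmul, map_mul qh.comulAt₂]
        simp only [mul_assoc]
    _ = qh.alphaBetaContract (appendOne qh.assocInv * includeOuter (1 ⊗ₜ h)) := by
        rw [alphaBetaContract_comulAt₁_mul, counitTensor_assoc, map_one, map_one, one_mul,
          alphaBetaContract_mul_comulAt₂, map_mul qh.counitMid, counitMid_assocInv, one_mul,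
          counitMid_tmul,
          counitTensor_comul]
    _ = 1 ⊗ₜ h := by
        rw [alphaBetaContract_appendOne_mul_includeOuter, alphaBetaTriple_assocInv]

theorem drinfeldCan_drinfeldInvAux (h : H) :
    drinfeldCan qh (drinfeldInvAux qh h) = 1 ⊗ₜ h := by
  calc drinfeldCan qh (drinfeldInvAux qh h)
      = qh.betaAlphaContract (includeRight
          (qh.assocInv * Algebra.TensorProduct.map (AlgHom.id k H) qh.comul (qh.comul h))
            * qh.comulAt₃ qh.assoc) :=
        qh.leftExtend_mulLeft_drinfeldWOf_rTensor_betaPairing _ _ _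
    _ = qh.betaAlphaContract (qh.comulAt₂ ((1 ⊗ₜ qh.comul h) * qh.assoc)
          * (appendOne qh.assoc * qh.comulAt₁ qh.assocInv)) := by
        rw [assocInv_mul_comul_comul, map_mul includeRight, mul_assoc,
          includeRight_assocInv_mul_comulAt₃_assoc, ← mul_assoc, ← comulAt₂_one_tmul,
          ← map_mul qh.comulAt₂]
    _ = qh.betaAlphaContract (includeOuter (1 ⊗ₜ h) * appendOne qh.assoc) := by
        rw [betaAlphaContract_comulAt₂_mul, map_mul qh.counitMid, counitMid_assoc, mul_one,
          counitMid_tmul,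
          counitTensor_comul, ← mul_assoc, betaAlphaContract_mul_comulAt₁, counitTensor_assocInv,
          map_one, map_one, mul_one]
    _ = 1 ⊗ₜ h := by
        rw [betaAlphaContract_includeOuter_mul_appendOne, betaAlphaTriple_assoc]

end QuasiHopf

/-- Drinfeld's canonical map is bijective, with the stated inverse. -/
theorem drinfeldCan_bijective (qh : QuasiHopf k H) :
    Function.Bijective (drinfeldCan qh) ∧
      drinfeldCanInv qh ∘ₗ drinfeldCan qh = LinearMap.id ∧
      drinfeldCan qh ∘ₗ drinfeldCanInv qh = LinearMap.id := by
  have hleft : drinfeldCanInv qh ∘ₗ drinfeldCan qh = LinearMap.id :=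
    leftExtend_comp_leftExtend qh.drinfeldCanInv_drinfeldW_mul_comul
  have hright : drinfeldCan qh ∘ₗ drinfeldCanInv qh = LinearMap.id :=
    leftExtend_comp_leftExtend qh.drinfeldCan_drinfeldInvAux
  exact ⟨Function.bijective_iff_has_inverse.mpr
    ⟨drinfeldCanInv qh, LinearMap.congr_fun hleft, LinearMap.congr_fun hright⟩, hleft, hright⟩
end

section
/- Let H be a quasi-Hopf algebra and V a finite-dimensional left H-module. Then V* with action (h·f)(v) = f(S(h)v), together with evaluation ev: V*⊗V → k, f⊗v ↦ f(αv), and coevaluation db: k → V⊗V*, 1 ↦ Σᵢ βvᵢ ⊗ vⁱ (for dual bases vᵢ, vⁱ), makes V* a right dual of V in the monoidal category of left H-modules; i.e., the triangle (snake) identities hold with respect to the associativity constraint given by φ. -/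
open TensorProduct LinearMap

variable {k : Type*} [Field k] {H : Type*} [Ring H] [Algebra k H]

section Monoidal

variable {U V W X : Type*} [AddCommGroup U] [Module k U] [AddCommGroup V] [Module k V]
  [AddCommGroup W] [Module k W] [AddCommGroup X] [Module k X]

/-- `f` is a (unital, multiplicative) action of `H`, i.e. a representation. -/
def IsModuleAction (f : H →ₗ[k] Module.End k U) : Prop :=
  f 1 = 1 ∧ ∀ a b : H, f (a * b) = f a * f b

/-- The diagonal action of `H` on the tensor product of two modules,
`h • (u ⊗ v) = h₍₁₎u ⊗ h₍₂₎v`. -/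
noncomputable def act2 (qb : QuasiBialgebra k H)
    (f : H →ₗ[k] Module.End k U) (g : H →ₗ[k] Module.End k V) :
    H →ₗ[k] Module.End k (U ⊗[k] V) :=
  TensorProduct.homTensorHomMap (RingHom.id k) U V U V ∘ₗ TensorProduct.map f g ∘ₗ qb.comul.toLinearMap

/-- The action of an element of `H⊗H⊗H` on a threefold tensor product of modules. -/
noncomputable def actT3 (f : H →ₗ[k] Module.End k U) (g : H →ₗ[k] Module.End k V)
    (e : H →ₗ[k] Module.End k W) :
    H ⊗[k] (H ⊗[k] H) →ₗ[k] Module.End k (U ⊗[k] (V ⊗[k] W)) :=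
  TensorProduct.homTensorHomMap (RingHom.id k) U (V ⊗[k] W) U (V ⊗[k] W) ∘ₗ
    TensorProduct.map f
      (TensorProduct.homTensorHomMap (RingHom.id k) V W V W ∘ₗ TensorProduct.map g e)

/-- The associativity constraint `(u⊗v)⊗w ↦ φ⁽¹⁾u ⊗ (φ⁽²⁾v ⊗ φ⁽³⁾w)` of the category
of left `H`-modules over a quasibialgebra. -/
noncomputable def assocMap (qb : QuasiBialgebra k H) (f : H →ₗ[k] Module.End k U)
    (g : H →ₗ[k] Module.End k V) (e : H →ₗ[k] Module.End k W) :
    (U ⊗[k] V) ⊗[k] W →ₗ[k] U ⊗[k] (V ⊗[k] W) :=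
  actT3 f g e qb.assoc ∘ₗ (TensorProduct.assoc k U V W).toLinearMap

/-- The trivial action of `H` on the unit object `k`, via the counit. -/
noncomputable def unitAct (qb : QuasiBialgebra k H) : H →ₗ[k] Module.End k k :=
  qb.counit.toLinearMap.smulRight (1 : Module.End k k)

end Monoidal

section
variable {U V W : Type*} [AddCommGroup U] [Module k U] [AddCommGroup V] [Module k V]
  [AddCommGroup W] [Module k W]

/-- The inverse associativity constraint, given by the action of `φ⁻¹`. -/
noncomputable def assocInvMap (qb : QuasiBialgebra k H) (f : H →ₗ[k] Module.End k U)
    (g : H →ₗ[k] Module.End k V) (e : H →ₗ[k] Module.End k W) :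
    U ⊗[k] (V ⊗[k] W) →ₗ[k] (U ⊗[k] V) ⊗[k] W :=
  (TensorProduct.assoc k U V W).symm.toLinearMap ∘ₗ actT3 f g e qb.assocInv
end

variable {V : Type*} [AddCommGroup V] [Module k V] [FiniteDimensional k V]

/-- The dual action `(h·f)(v) = f(S(h)v)` on the linear dual of a module. -/
noncomputable def dualAct (qh : QuasiHopf k H) (ρ : H →ₗ[k] Module.End k V) :
    H →ₗ[k] Module.End k (Module.Dual k V) :=
  Module.Dual.transpose (R := k) (M := V) (M' := V) ∘ₗ ρ ∘ₗ qh.antipode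

/-- Evaluation `f ⊗ v ↦ f(α v)`. -/
noncomputable def dualEv (qh : QuasiHopf k H) (ρ : H →ₗ[k] Module.End k V) :
    Module.Dual k V ⊗[k] V →ₗ[k] k :=
  contractLeft k V ∘ₗ LinearMap.lTensor (Module.Dual k V) (ρ qh.alpha)

/-- Coevaluation `1 ↦ Σ β vᵢ ⊗ vⁱ`. -/
noncomputable def dualDb (qh : QuasiHopf k H) (ρ : H →ₗ[k] Module.End k V) :
    k →ₗ[k] V ⊗[k] Module.Dual k V :=
  LinearMap.rTensor (Module.Dual k V) (ρ qh.beta) ∘ₗ coevaluation k V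

/-! The `H`-linearity of `ev` and `db` and the two snake identities are the cases
`t = Δ(h)`, `Δ(h)`, `φ`, `φ⁻¹` of identities linear in `t ∈ H ⊗ H` or `t ∈ H ⊗ H ⊗ H`. On a
pure tensor, the dual-basis identity `Σ vⁱ(x) vᵢ = x` collapses the composite to the action on
`V` of a product in `H`, so these conditions become the quasi-antipode axioms
`Σ S(h₁)αh₂ = ε(h)α`, `Σ h₁βS(h₂) = ε(h)β`, `Σ φ¹βS(φ²)αφ³ = 1` and
`Σ S(φ⁻¹⁽¹⁾)αφ⁻¹⁽²⁾βS(φ⁻¹⁽³⁾) = 1`. -/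

namespace Module.Basis

variable {R M N ι : Type*} [CommSemiring R] [AddCommMonoid M] [Module R M] [AddCommMonoid N]
  [Module R N] [Fintype ι] (b : Basis ι R M)

theorem sum_coord_smul_map (A : M →ₗ[R] N) (x : M) : ∑ i, b.coord i x • A (b i) = A x := by
  simp only [coord_apply, ← map_smul, ← map_sum, b.sum_repr]

theorem sum_map_tmul_coord_comp (C : M →ₗ[R] N) (D : M →ₗ[R] M) :
    ∑ i, C (b i) ⊗ₜ[R] (b.coord i ∘ₗ D) = ∑ i, C (D (b i)) ⊗ₜ[R] b.coord i := by
  have expand : ∀ i, b.coord i ∘ₗ D = ∑ j, b.coord i (D (b j)) • b.coord j := fun i =>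
    (b.sum_dual_apply_smul_coord _).symm
  calc ∑ i, C (b i) ⊗ₜ[R] (b.coord i ∘ₗ D)
      = ∑ j, (∑ i, b.coord i (D (b j)) • C (b i)) ⊗ₜ[R] b.coord j := by
        simp only [expand, tmul_sum, sum_tmul, tmul_smul, ← smul_tmul']
        exact Finset.sum_comm
    _ = ∑ j, C (D (b j)) ⊗ₜ[R] b.coord j := by simp only [sum_coord_smul_map]

end Module.Basis

section Representation

variable {U W : Type*} [AddCommGroup U] [Module k U] [AddCommGroup W] [Module k W]

noncomputable def actT2 (f : H →ₗ[k] Module.End k U) (g : H →ₗ[k] Module.End k W) :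
    H ⊗[k] H →ₗ[k] Module.End k (U ⊗[k] W) :=
  TensorProduct.homTensorHomMap (RingHom.id k) U W U W ∘ₗ TensorProduct.map f g

theorem act2_apply (qb : QuasiBialgebra k H) (f : H →ₗ[k] Module.End k U)
    (g : H →ₗ[k] Module.End k W) (h : H) : act2 qb f g h = actT2 f g (qb.comul h) :=
  rfl

end Representation

namespace QuasiHopf

variable (qh : QuasiHopf k H)

section

variable {M : Type*} [AddCommGroup M] [Module k M] {ρ : H →ₗ[k] Module.End k M}

theorem isModuleAction_dualAct (hρ : IsModuleAction ρ) : IsModuleAction (dualAct qh ρ) := by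
  refine ⟨?_, fun a b => ?_⟩ <;> ext f v
  · simp [dualAct, Module.Dual.transpose_apply, qh.isQuasiAntipode.map_one, hρ.1]
  · simp [dualAct, Module.Dual.transpose_apply, qh.isQuasiAntipode.map_mul, hρ.2]

theorem dualEv_comp_actT2 (hρ : IsModuleAction ρ) (t : H ⊗[k] H) :
    dualEv qh ρ ∘ₗ actT2 (dualAct qh ρ) ρ t
      = contractLeft k M ∘ₗ LinearMap.lTensor (Module.Dual k M)
          (ρ (LinearMap.mul' k H
            ((TensorProduct.map (LinearMap.mulRight k qh.alpha ∘ₗ qh.antipode) LinearMap.id) t))) := by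
  induction t using TensorProduct.induction_on with
  | zero => simp
  | add x y hx hy => simp only [map_add, LinearMap.comp_add, hx, hy, LinearMap.lTensor_add]
  | tmul a b =>
    refine TensorProduct.ext' fun f v => ?_
    simp [actT2, dualEv, dualAct, Module.Dual.transpose_apply, hρ.2]

end

variable {ρ : H →ₗ[k] Module.End k V}

local notation "𝔟" => Module.Basis.ofVectorSpace k V

theorem dualDb_one : dualDb qh ρ 1 = ∑ i, ρ qh.beta (𝔟 i) ⊗ₜ[k] (𝔟).coord i := by
  simp [dualDb, coevaluation_apply_one]

theorem actT2_dualDb (hρ : IsModuleAction ρ) (t : H ⊗[k] H) :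
    actT2 ρ (dualAct qh ρ) t (dualDb qh ρ 1)
      = LinearMap.rTensor (Module.Dual k V)
          (ρ (LinearMap.mul' k H
            ((TensorProduct.map LinearMap.id (LinearMap.mulLeft k qh.beta ∘ₗ qh.antipode)) t)))
          (coevaluation k V 1) := by
  induction t using TensorProduct.induction_on with
  | zero => simp
  | add x y hx hy => simp only [map_add, LinearMap.add_apply, hx, hy, LinearMap.rTensor_add]
  | tmul a b =>
    have move := (𝔟).sum_map_tmul_coord_comp (ρ a ∘ₗ ρ qh.beta) (ρ (qh.antipode b))
    simp only [LinearMap.comp_apply] at move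
    simpa [actT2, dualDb_one, dualAct, Module.Dual.transpose_apply, coevaluation_apply_one, hρ.2]
      using move

theorem snake_left_actT3 (hρ : IsModuleAction ρ) (t : H ⊗[k] (H ⊗[k] H)) :
    (TensorProduct.rid k V).toLinearMap
        ∘ₗ LinearMap.lTensor V (dualEv qh ρ)
        ∘ₗ actT3 ρ (dualAct qh ρ) ρ t
        ∘ₗ (TensorProduct.assoc k V (Module.Dual k V) V).toLinearMap
        ∘ₗ LinearMap.rTensor V (dualDb qh ρ)
        ∘ₗ (TensorProduct.lid k V).symm.toLinearMap
      = ρ (LinearMap.mul' k H ((TensorProduct.map (LinearMap.mulRight k qh.beta)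
          (LinearMap.mul' k H ∘ₗ TensorProduct.map
            (LinearMap.mulRight k qh.alpha ∘ₗ qh.antipode) LinearMap.id)) t)) := by
  induction t using TensorProduct.induction_on with
  | zero => ext; simp
  | add x y hx hy => simp only [map_add, LinearMap.comp_add, LinearMap.add_comp, hx, hy]
  | tmul a bc =>
    induction bc using TensorProduct.induction_on with
    | zero => ext; simp
    | add x y hx hy => simp only [tmul_add, map_add, LinearMap.comp_add, LinearMap.add_comp, hx, hy]
    | tmul b c =>
      ext v
      have collapse := (𝔟).sum_coord_smul_map (ρ a ∘ₗ ρ qh.beta)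
        (ρ (qh.antipode b) (ρ qh.alpha (ρ c v)))
      simp only [LinearMap.comp_apply] at collapse
      simpa [actT3, dualDb_one, sum_tmul, dualEv, dualAct, Module.Dual.transpose_apply, hρ.2]
        using collapse

theorem snake_right_actT3 (hρ : IsModuleAction ρ) (t : H ⊗[k] (H ⊗[k] H)) :
    (TensorProduct.lid k (Module.Dual k V)).toLinearMap
        ∘ₗ LinearMap.rTensor (Module.Dual k V) (dualEv qh ρ)
        ∘ₗ (TensorProduct.assoc k (Module.Dual k V) V (Module.Dual k V)).symm.toLinearMap
        ∘ₗ actT3 (dualAct qh ρ) ρ (dualAct qh ρ) t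
        ∘ₗ LinearMap.lTensor (Module.Dual k V) (dualDb qh ρ)
        ∘ₗ (TensorProduct.rid k (Module.Dual k V)).symm.toLinearMap
      = Module.Dual.transpose (ρ (LinearMap.mul' k H ((TensorProduct.map
          (LinearMap.mulRight k qh.alpha ∘ₗ qh.antipode)
          (LinearMap.mul' k H ∘ₗ TensorProduct.map
            (LinearMap.mulRight k qh.beta) qh.antipode)) t))) := by
  induction t using TensorProduct.induction_on with
  | zero => ext; simp
  | add x y hx hy => simp only [map_add, LinearMap.comp_add, LinearMap.add_comp, hx, hy]
  | tmul a bc =>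
    induction bc using TensorProduct.induction_on with
    | zero => ext; simp
    | add x y hx hy => simp only [tmul_add, map_add, LinearMap.comp_add, LinearMap.add_comp, hx, hy]
    | tmul b c =>
      ext f w
      have collapse := (𝔟).sum_coord_smul_map
        (f ∘ₗ ρ (qh.antipode a) ∘ₗ ρ qh.alpha ∘ₗ ρ b ∘ₗ ρ qh.beta) (ρ (qh.antipode c) w)
      simp only [LinearMap.comp_apply, smul_eq_mul] at collapse
      simpa [actT3, dualDb_one, tmul_sum, dualEv, dualAct, Module.Dual.transpose_apply, hρ.2,
        mul_comm] using collapse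

end QuasiHopf

open QuasiHopf in
/-- For a finite-dimensional module `V` over a quasi-Hopf algebra `H`,
the dual space `V*` with the `S`-twisted action, together with the `α`-twisted evaluation
and `β`-twisted coevaluation, is a right dual of `V` in the monoidal category of left
`H`-modules: both maps are `H`-linear and the snake identities hold w.r.t. the
`φ`-associator. -/
theorem dual_module_is_right_dual (qh : QuasiHopf k H)
    (ρ : H →ₗ[k] Module.End k V) (hρ : IsModuleAction ρ) :
    -- the dual action is a module structure
    IsModuleAction (dualAct qh ρ) ∧
    -- evaluation is `H`-linear
    (∀ h : H, dualEv qh ρ ∘ₗ act2 qh.toQuasiBialgebra (dualAct qh ρ) ρ h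
      = qh.counit h • dualEv qh ρ) ∧
    -- coevaluation is `H`-linear
    (∀ h : H, act2 qh.toQuasiBialgebra ρ (dualAct qh ρ) h (dualDb qh ρ 1)
      = qh.counit h • dualDb qh ρ 1) ∧
    -- first snake identity
    ((TensorProduct.rid k V).toLinearMap
        ∘ₗ LinearMap.lTensor V (dualEv qh ρ)
        ∘ₗ assocMap qh.toQuasiBialgebra ρ (dualAct qh ρ) ρ
        ∘ₗ LinearMap.rTensor V (dualDb qh ρ)
        ∘ₗ (TensorProduct.lid k V).symm.toLinearMap
      = LinearMap.id) ∧
    -- second snake identity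
    ((TensorProduct.lid k (Module.Dual k V)).toLinearMap
        ∘ₗ LinearMap.rTensor (Module.Dual k V) (dualEv qh ρ)
        ∘ₗ assocInvMap qh.toQuasiBialgebra (dualAct qh ρ) ρ (dualAct qh ρ)
        ∘ₗ LinearMap.lTensor (Module.Dual k V) (dualDb qh ρ)
        ∘ₗ (TensorProduct.rid k (Module.Dual k V)).symm.toLinearMap
      = LinearMap.id) := by
  have hS := qh.isQuasiAntipode
  refine ⟨isModuleAction_dualAct qh hρ, fun h => ?_, fun h => ?_, ?_, ?_⟩
  · rw [act2_apply, dualEv_comp_actT2 qh hρ, hS.antipode_left, map_smul, LinearMap.lTensor_smul,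
      LinearMap.comp_smul]
    rfl
  · rw [act2_apply, actT2_dualDb qh hρ, hS.antipode_right, map_smul, LinearMap.rTensor_smul]
    rfl
  · exact (snake_left_actT3 qh hρ qh.assoc).trans (by rw [hS.assoc_antipode, hρ.1]; rfl)
  · exact (snake_right_actT3 qh hρ qh.assocInv).trans (by rw [hS.assocInv_antipode, hρ.1]; rfl)
end
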